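/- arXiv:1610.01253 — 2 statements merged into one kernel-verified Lean document; each statement's English description precedes it below -/
import Mathlib

section
/- For all nonnegative integers h, k, ℓ with k ≤ 2ℓ, the alternating sum ∑_{j=0}^{h} (-1)^j C(h,j) K_{2j}(k) equals ((-k)_h (-2ℓ+k)_h)/((-ℓ)_h (-ℓ+1/2)_h), where K_n(x) = K_n(x; 1/2, 2ℓ) are the Krawtchouk polynomials and (a)_h denotes the Pochhammer (rising factorial) symbol. -/
open Finset

/-- Pochhammer (rising factorial) symbol `(a)_n = a(a+1)⋯(a+n-1)`. -/
noncomputable def poch (a : ℝ) (n : ℕ) : ℝ := ∏ i ∈ Finset.range n, (a + i)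

/-- Krawtchouk polynomial `K_n(x; 1/2, N)`. -/
noncomputable def kraw (N : ℕ) (n : ℕ) (x : ℝ) : ℝ :=
  ∑ i ∈ Finset.range (n + 1),
    poch (-(n : ℝ)) i * poch (-x) i / (poch (-(N : ℝ)) i * (Nat.factorial i)) * 2 ^ i

/-!
Writing `K_n(x) = ∑ᵢ C(n,i) κᵢ(x)` with `κᵢ(x) = (-1)ⁱ (-x)ᵢ 2ⁱ / (-N)ᵢ` and exchanging the sums,
the coefficient of `κᵢ` is `∑ⱼ (-1)ʲ C(h,j) C(2j,i)`, the coefficient of `Xⁱ` in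
`(1 - (1+X)²)ʰ = (-1)ʰ Xʰ (X+2)ʰ`. Only `i = h + m` with `m ≤ h` survive, and what remains is a
terminating Chu–Vandermonde sum, equal to `4ʰ (-x)ₕ (x-N)ₕ / (-N)₂ₕ` whenever `2h ≤ N`.
For `N = 2ℓ` the duplication formula `(-2ℓ)₂ₕ = 4ʰ (-ℓ)ₕ (-ℓ+1/2)ₕ` gives the theorem.
-/

open Polynomial

section CommRing

variable {R : Type*} [CommRing R]

lemma descPochhammer_smeval_eq_eval (r : R) (n : ℕ) :
    (descPochhammer ℤ n).smeval r = (descPochhammer R n).eval r := by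
  rw [← aeval_eq_smeval, aeval_def, eval₂_eq_eval_map, descPochhammer_map]

lemma sum_neg_one_pow_mul_choose_mul_one_add_X_pow (h : ℕ) :
    ∑ j ∈ range (h + 1), C ((-1 : R) ^ j * h.choose j) * (1 + X) ^ (2 * j) =
      C ((-1) ^ h) * (X ^ h * (X + C 2) ^ h) := by
  have binomial : (C (-1) * (1 + X) ^ 2 + 1 : R[X]) ^ h =
      ∑ j ∈ range (h + 1), C ((-1 : R) ^ j * h.choose j) * (1 + X) ^ (2 * j) := by
    rw [add_pow]
    refine sum_congr rfl fun j _ => ?_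
    rw [one_pow, mul_one, mul_pow, ← pow_mul, map_mul, map_pow, map_natCast]
    ring
  have factor : (C (-1) * (1 + X) ^ 2 + 1 : R[X]) = C (-1) * (X * (X + C 2)) := by
    rw [map_neg, map_one, map_ofNat]
    ring
  rw [← binomial, factor, mul_pow, map_pow, mul_pow]

lemma sum_neg_one_pow_mul_choose_mul_choose_two_mul (h i : ℕ) :
    ∑ j ∈ range (h + 1), (-1 : R) ^ j * h.choose j * (2 * j).choose i =
      if h ≤ i then (-1 : R) ^ h * h.choose (i - h) * 2 ^ (2 * h - i) else 0 := by
  have coeffs := congrArg (coeff · i) (sum_neg_one_pow_mul_choose_mul_one_add_X_pow (R := R) h)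
  simp only [finsetSum_coeff, coeff_C_mul, coeff_one_add_X_pow, coeff_X_pow_mul'] at coeffs
  rw [coeffs]
  split_ifs with hi
  · rw [coeff_X_add_C_pow, show h - (i - h) = 2 * h - i by omega]
    ring
  · rw [mul_zero]

lemma sum_neg_one_pow_mul_choose_mul_sum_choose_two_mul (w : ℕ → R) (h : ℕ) :
    ∑ j ∈ range (h + 1), (-1) ^ j * h.choose j * ∑ i ∈ range (2 * h + 1), (2 * j).choose i * w i =
      ∑ m ∈ range (h + 1), h.choose m * ((-1) ^ h * 2 ^ (h - m) * w (h + m)) := by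
  simp only [mul_sum, ← mul_assoc]
  rw [sum_comm]
  simp only [← sum_mul, sum_neg_one_pow_mul_choose_mul_choose_two_mul]
  rw [show 2 * h + 1 = h + (h + 1) by ring, sum_range_add,
    sum_eq_zero fun i hi => by rw [if_neg (by simpa using hi), zero_mul], zero_add]
  refine sum_congr rfl fun m hm => ?_
  rw [if_pos (by omega), Nat.add_sub_cancel_left, show 2 * h - (h + m) = h - m by omega]
  ring

end CommRing

lemma poch_succ (a : ℝ) (n : ℕ) : poch a (n + 1) = poch a n * (a + n) := prod_range_succ _ _

lemma poch_add (a : ℝ) (m n : ℕ) : poch a (m + n) = poch a m * poch (a + m) n := by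
  simp only [poch, prod_range_add, Nat.cast_add, add_assoc]

lemma poch_eq_ascPochhammer_eval (a : ℝ) (n : ℕ) : poch a n = (ascPochhammer ℝ n).eval a := by
  induction n with
  | zero => simp [poch]
  | succ n ih => rw [poch_succ, ih, ascPochhammer_succ_eval]

lemma poch_eq_descPochhammer_eval (a : ℝ) (n : ℕ) :
    poch a n = (descPochhammer ℝ n).eval (a + n - 1) := by
  rw [descPochhammer_eval_eq_ascPochhammer, poch_eq_ascPochhammer_eval]
  ring_nf

lemma neg_one_pow_mul_poch (a : ℝ) (n : ℕ) :
    (-1) ^ n * poch a n = (descPochhammer ℝ n).eval (-a) := by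
  rw [poch_eq_ascPochhammer_eval, ← neg_neg a, ascPochhammer_eval_neg_eq_descPochhammer, neg_neg,
    ← mul_assoc, ← mul_pow]
  norm_num

lemma poch_neg_natCast (n i : ℕ) : poch (-n) i = (-1) ^ i * i.factorial * n.choose i := by
  have h := neg_one_pow_mul_poch (-n) i
  rw [neg_neg, descPochhammer_eval_eq_descFactorial, Nat.descFactorial_eq_factorial_mul_choose,
    Nat.cast_mul] at h
  rw [mul_assoc, ← h, ← mul_assoc, ← mul_pow]
  norm_num

lemma poch_neg_natCast_ne_zero {N n : ℕ} (h : n ≤ N) : poch (-N) n ≠ 0 := by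
  rw [poch_eq_ascPochhammer_eval, ne_eq, ascPochhammer_eval_eq_zero_iff]
  rintro ⟨k, hk, hkN⟩
  rw [neg_neg, Nat.cast_inj] at hkN
  omega

lemma poch_two_mul (a : ℝ) (h : ℕ) :
    poch (2 * a) (2 * h) = 4 ^ h * poch a h * poch (a + 1 / 2) h := by
  induction h with
  | zero => simp [poch]
  | succ h ih =>
    rw [show 2 * (h + 1) = 2 * h + 1 + 1 by ring, poch_succ, poch_succ, ih, poch_succ, poch_succ]
    push_cast
    ring

/-- Chu–Vandermonde for falling factorials, at `-a` and `c + h - 1`. -/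
lemma poch_sub_eq_sum (a c : ℝ) (h : ℕ) :
    poch (c - a) h =
      ∑ m ∈ range (h + 1), h.choose m * ((-1) ^ m * poch a m * poch (c + m) (h - m)) := by
  have vandermonde := Ring.descPochhammer_smeval_add (r := -a) (s := c + h - 1) h (Commute.all _ _)
  simp only [descPochhammer_smeval_eq_eval] at vandermonde
  rw [Nat.sum_antidiagonal_eq_sum_range_succ
    (fun i j => (h.choose i : ℝ) * ((descPochhammer ℝ i).eval (-a) *
      (descPochhammer ℝ j).eval (c + h - 1)))] at vandermonde
  rw [poch_eq_descPochhammer_eval, show c - a + h - 1 = -a + (c + h - 1) by ring, vandermonde]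
  refine sum_congr rfl fun m hm => ?_
  have hmh : m ≤ h := Nat.lt_succ_iff.mp (mem_range.mp hm)
  rw [← neg_one_pow_mul_poch, poch_eq_descPochhammer_eval (c + m), Nat.cast_sub hmh]
  ring_nf

noncomputable def krawCoeff (N : ℕ) (x : ℝ) (i : ℕ) : ℝ :=
  (-1) ^ i * poch (-x) i * 2 ^ i / poch (-N) i

lemma kraw_eq_sum_choose_mul_krawCoeff (N : ℕ) {n M : ℕ} (hnM : n ≤ M) (x : ℝ) :
    kraw N n x = ∑ i ∈ range (M + 1), n.choose i * krawCoeff N x i := by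
  rw [kraw]
  calc _ = ∑ i ∈ range (n + 1), n.choose i * krawCoeff N x i := by
        refine sum_congr rfl fun i _ => ?_
        have : (i.factorial : ℝ) ≠ 0 := by positivity
        rw [krawCoeff, poch_neg_natCast]
        field_simp
    _ = _ := sum_subset (range_subset_range.2 (by omega)) fun i _ hi => by
        rw [Nat.choose_eq_zero_of_lt (by simpa using hi), Nat.cast_zero, zero_mul]

lemma neg_one_pow_mul_two_pow_mul_krawCoeff_add {N h m : ℕ} (hN : 2 * h ≤ N) (hm : m ≤ h)
    (x : ℝ) :
    (-1) ^ h * 2 ^ (h - m) * krawCoeff N x (h + m) =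
      4 ^ h * poch (-x) h / poch (-N) (2 * h) *
        ((-1) ^ m * poch (-x + h) m * poch (-N + h + m) (h - m)) := by
  have sign : (-1 : ℝ) ^ h * (-1) ^ (h + m) = (-1) ^ m := by
    rw [← pow_add, show h + (h + m) = 2 * h + m by ring, pow_add, pow_mul]
    norm_num
  have power : (2 : ℝ) ^ (h - m) * 2 ^ (h + m) = 4 ^ h := by
    rw [← pow_add, show h - m + (h + m) = 2 * h by omega, pow_mul]
    norm_num
  have split : poch (-N) (2 * h) = poch (-N) (h + m) * poch (-N + h + m) (h - m) := by
    rw [show 2 * h = h + m + (h - m) by omega, poch_add, Nat.cast_add, add_assoc]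
  obtain ⟨hQ₁, hQ₂⟩ := mul_ne_zero_iff.mp (split ▸ poch_neg_natCast_ne_zero hN)
  rw [krawCoeff, split, poch_add (-x) h m]
  calc _ = ((-1) ^ h * (-1) ^ (h + m)) * (2 ^ (h - m) * 2 ^ (h + m)) *
        poch (-x) h * poch (-x + h) m / poch (-N) (h + m) := by ring
    _ = _ := by
      rw [sign, power]
      field_simp

theorem sum_neg_one_pow_mul_choose_mul_kraw_two_mul {N h : ℕ} (hN : 2 * h ≤ N) (x : ℝ) :
    ∑ j ∈ range (h + 1), (-1) ^ j * h.choose j * kraw N (2 * j) x =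
      4 ^ h * poch (-x) h * poch (x - N) h / poch (-N) (2 * h) := by
  calc _ = ∑ j ∈ range (h + 1), (-1) ^ j * h.choose j *
          ∑ i ∈ range (2 * h + 1), (2 * j).choose i * krawCoeff N x i :=
        sum_congr rfl fun j hj => by
          rw [kraw_eq_sum_choose_mul_krawCoeff N (M := 2 * h) (by have := mem_range.mp hj; omega)]
    _ = ∑ m ∈ range (h + 1), h.choose m * ((-1) ^ h * 2 ^ (h - m) * krawCoeff N x (h + m)) :=
        sum_neg_one_pow_mul_choose_mul_sum_choose_two_mul _ h
    _ = 4 ^ h * poch (-x) h / poch (-N) (2 * h) * ∑ m ∈ range (h + 1),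
          h.choose m * ((-1) ^ m * poch (-x + h) m * poch (-N + h + m) (h - m)) := by
        rw [mul_sum]
        refine sum_congr rfl fun m hm => ?_
        rw [neg_one_pow_mul_two_pow_mul_krawCoeff_add hN (by have := mem_range.mp hm; omega),
          mul_left_comm]
    _ = _ := by
        rw [← poch_sub_eq_sum]
        ring_nf

theorem krawtchouk_alternating_sum_general (ℓ h k : ℕ) (hh : h ≤ ℓ) :
    ∑ j ∈ Finset.range (h + 1), (-1 : ℝ) ^ j * (h.choose j) * kraw (2 * ℓ) (2 * j) k =
      poch (-(k : ℝ)) h * poch (-(2 * ℓ : ℝ) + k) h /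
        (poch (-(ℓ : ℝ)) h * poch (-(ℓ : ℝ) + 1 / 2) h) := by
  rw [sum_neg_one_pow_mul_choose_mul_kraw_two_mul (by omega), Nat.cast_mul, Nat.cast_ofNat,
    ← mul_neg, poch_two_mul, mul_assoc, mul_assoc, mul_div_mul_left _ _ (by positivity)]
  ring_nf

/-- `∑_{j=0}^{h} (-1)^j C(h,j) K_{2j}(k)
  = ((-k)_h (-2ℓ+k)_h)/((-ℓ)_h (-ℓ+1/2)_h)`. -/
theorem krawtchouk_alternating_sum (ℓ h k : ℕ) (hℓ : 1 ≤ ℓ) (hk : k ≤ 2 * ℓ) (hh : h ≤ ℓ) :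
    ∑ j ∈ Finset.range (h + 1), (-1 : ℝ) ^ j * (h.choose j) * kraw (2 * ℓ) (2 * j) k =
      poch (-(k : ℝ)) h * poch (-(2 * ℓ : ℝ) + k) h /
        (poch (-(ℓ : ℝ)) h * poch (-(ℓ : ℝ) + 1 / 2) h) :=
  krawtchouk_alternating_sum_general ℓ h k hh
end

section
/- For ν > -1/2, the integral ∫₀¹ e₁* W₁(y)/y e₁ dy = ∫₀¹ [y(1-y)]^{ν-1/2}(1 - (2(1+ν)/(ν+1/2))y(1-y))/y dy diverges (equals ∞) if and only if ν ≤ 1/2. -/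
open MeasureTheory Set

private lemma meas_aux (a b : ℝ) :
    Measurable (fun y : ℝ => y ^ a * (1 - y) ^ b) := by
  fun_prop

/-- integrability on the left half `(0, 1/2)` when the exponent at `0` is `> -1`. -/
private lemma int_left (a b : ℝ) (ha : -1 < a) :
    IntegrableOn (fun y : ℝ => y ^ a * (1 - y) ^ b) (Set.Ioo (0 : ℝ) (1 / 2)) := by
  have hbase : IntegrableOn (fun y : ℝ => y ^ a) (Set.Ioo (0 : ℝ) (1 / 2)) :=
    (intervalIntegral.integrableOn_Ioo_rpow_iff (by norm_num)).2 ha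
  have hC : IntegrableOn (fun y : ℝ => max 1 ((1 / 2 : ℝ) ^ b) * y ^ a)
      (Set.Ioo (0 : ℝ) (1 / 2)) := hbase.const_mul _
  refine hC.mono' ((meas_aux a b).aestronglyMeasurable) ?_
  rw [ae_restrict_iff' measurableSet_Ioo]
  refine Filter.Eventually.of_forall fun y hy => ?_
  have hy0 : (0 : ℝ) < y := hy.1
  have hy1 : y < 1 / 2 := hy.2
  have h1y : (1 / 2 : ℝ) ≤ 1 - y := by linarith
  have h1y0 : (0 : ℝ) ≤ 1 - y := by linarith
  have hya : (0 : ℝ) ≤ y ^ a := Real.rpow_nonneg hy0.le a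
  have hb : (1 - y) ^ b ≤ max 1 ((1 / 2 : ℝ) ^ b) := by
    rcases le_or_gt 0 b with hbpos | hbneg
    · exact le_max_of_le_left (Real.rpow_le_one h1y0 (by linarith) hbpos)
    · exact le_max_of_le_right (Real.rpow_le_rpow_of_nonpos (by norm_num) h1y hbneg.le)
  have hbnn : (0 : ℝ) ≤ (1 - y) ^ b := Real.rpow_nonneg h1y0 b
  rw [Real.norm_eq_abs, abs_of_nonneg (mul_nonneg hya hbnn)]
  calc y ^ a * (1 - y) ^ b ≤ y ^ a * max 1 ((1 / 2 : ℝ) ^ b) :=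
        mul_le_mul_of_nonneg_left hb hya
    _ = max 1 ((1 / 2 : ℝ) ^ b) * y ^ a := mul_comm _ _

/-- full beta-type integrability on `(0,1)` when both exponents are `> -1`. -/
private lemma int_beta (a b : ℝ) (ha : -1 < a) (hb : -1 < b) :
    IntegrableOn (fun y : ℝ => y ^ a * (1 - y) ^ b) (Set.Ioo (0 : ℝ) 1) := by
  have h1 := int_left a b ha
  have h2 := int_left b a hb
  have h2' : IntegrableOn (fun y : ℝ => y ^ a * (1 - y) ^ b) (Set.Ioo (1 / 2 : ℝ) 1) := by
    have hI : IntervalIntegrable (fun y : ℝ => y ^ b * (1 - y) ^ a) volume 0 (1 / 2) :=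
      (intervalIntegrable_iff_integrableOn_Ioo_of_le (by norm_num)).2 h2
    have hI2 := hI.comp_sub_left 1
    have hfun : (fun x : ℝ => (1 - x) ^ b * (1 - (1 - x)) ^ a)
        = fun x : ℝ => x ^ a * (1 - x) ^ b := by
      funext x; rw [sub_sub_cancel]; ring
    rw [hfun] at hI2
    norm_num at hI2
    exact (intervalIntegrable_iff_integrableOn_Ioo_of_le (by norm_num)).1 hI2.symm
  have hsub : Set.Ioo (0 : ℝ) 1 ⊆ Set.Ioo (0 : ℝ) (1 / 2) ∪ Set.Ioo (1 / 2 : ℝ) 1 ∪ {1 / 2} := by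
    intro x hx
    rcases lt_trichotomy x (1 / 2) with h | h | h
    · exact Or.inl (Or.inl ⟨hx.1, h⟩)
    · exact Or.inr (by simp [h])
    · exact Or.inl (Or.inr ⟨h, hx.2⟩)
  have hone : IntegrableOn (fun y : ℝ => y ^ a * (1 - y) ^ b) ({1 / 2} : Set ℝ) := by
    refine (integrableOn_singleton_iff enorm_ne_top).2 (Or.inr ?_)
    simp
  exact ((h1.union h2').union hone).mono_set hsub

/-- non-integrability of `y^a (1-y)^b` on `(0,1)` when `a ≤ -1`. -/
private lemma not_int (a b : ℝ) (ha : a ≤ -1) :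
    ¬ IntegrableOn (fun y : ℝ => y ^ a * (1 - y) ^ b) (Set.Ioo (0 : ℝ) 1) := by
  intro h
  set c : ℝ := min 1 ((1 / 2 : ℝ) ^ b) with hc
  have hcpos : 0 < c := lt_min one_pos (Real.rpow_pos_of_pos (by norm_num) b)
  have h' : IntegrableOn (fun y : ℝ => y ^ a * (1 - y) ^ b) (Set.Ioo (0 : ℝ) (1 / 2)) :=
    h.mono_set (Set.Ioo_subset_Ioo le_rfl (by norm_num))
  have hmul : IntegrableOn (fun y : ℝ => c⁻¹ * (y ^ a * (1 - y) ^ b))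
      (Set.Ioo (0 : ℝ) (1 / 2)) := h'.const_mul _
  have hpow : IntegrableOn (fun y : ℝ => y ^ a) (Set.Ioo (0 : ℝ) (1 / 2)) := by
    refine hmul.mono' (by fun_prop) ?_
    rw [ae_restrict_iff' measurableSet_Ioo]
    refine Filter.Eventually.of_forall fun y hy => ?_
    have hy0 : (0 : ℝ) < y := hy.1
    have hy1 : y < 1 / 2 := hy.2
    have h1y : (1 / 2 : ℝ) ≤ 1 - y := by linarith
    have h1ylt : 1 - y ≤ 1 := by linarith
    have h1y0 : (0 : ℝ) < 1 - y := by linarith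
    have hya : (0 : ℝ) ≤ y ^ a := Real.rpow_nonneg hy0.le a
    have hcb : c ≤ (1 - y) ^ b := by
      rcases le_or_gt 0 b with hbpos | hbneg
      · exact le_trans (min_le_right _ _) (Real.rpow_le_rpow (by norm_num) h1y hbpos)
      · exact le_trans (min_le_left _ _)
          (Real.one_le_rpow_of_pos_of_le_one_of_nonpos h1y0 h1ylt hbneg.le)
    rw [Real.norm_eq_abs, abs_of_nonneg hya]
    calc y ^ a = c⁻¹ * (c * y ^ a) := by
          field_simp
      _ ≤ c⁻¹ * (y ^ a * (1 - y) ^ b) := by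
          refine mul_le_mul_of_nonneg_left ?_ (inv_nonneg.2 hcpos.le)
          calc c * y ^ a ≤ (1 - y) ^ b * y ^ a := mul_le_mul_of_nonneg_right hcb hya
            _ = y ^ a * (1 - y) ^ b := mul_comm _ _
  have := (intervalIntegral.integrableOn_Ioo_rpow_iff (show (0:ℝ) < 1/2 by norm_num)).1 hpow
  linarith

/-- the Karlin–McGregor recurrence integral for the ℓ=1 QBD process,
`∫₀¹ [y(1-y)]^{ν-1/2}(1 - (2(1+ν)/(ν+1/2))y(1-y))/y dy`, diverges (i.e. the integrand
is not integrable on `(0,1)`) if and only if `ν ≤ 1/2`, for `ν > -1/2`. -/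
theorem qbd_recurrence_criterion (ν : ℝ) (hν : -1 / 2 < ν) :
    ¬ IntegrableOn
        (fun y : ℝ =>
          (y * (1 - y)) ^ (ν - 1 / 2) * (1 - 2 * (1 + ν) / (ν + 1 / 2) * (y * (1 - y))) / y)
        (Set.Ioo (0 : ℝ) 1) ↔ ν ≤ 1 / 2 := by
  set C : ℝ := 2 * (1 + ν) / (ν + 1 / 2) with hC
  have hEq : Set.EqOn
      (fun y : ℝ =>
        (y * (1 - y)) ^ (ν - 1 / 2) * (1 - C * (y * (1 - y))) / y)
      (fun y : ℝ =>
        y ^ (ν - 3 / 2) * (1 - y) ^ (ν - 1 / 2) - C * (y ^ (ν - 1 / 2) * (1 - y) ^ (ν + 1 / 2)))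
      (Set.Ioo (0 : ℝ) 1) := by
    intro y hy
    have hy0 : (0 : ℝ) < y := hy.1
    have hy1 : (0 : ℝ) < 1 - y := by linarith [hy.2]
    simp only
    have e1 : y ^ (ν - 1 / 2) = y ^ (ν - 3 / 2) * y := by
      rw [show ν - 1 / 2 = (ν - 3 / 2) + 1 by ring, Real.rpow_add_one hy0.ne']
    have e2 : (1 - y) ^ (ν + 1 / 2) = (1 - y) ^ (ν - 1 / 2) * (1 - y) := by
      rw [show ν + 1 / 2 = (ν - 1 / 2) + 1 by ring, Real.rpow_add_one hy1.ne']
    rw [Real.mul_rpow hy0.le hy1.le, e1, e2]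
    have hyne := hy0.ne'
    field_simp
  have hcongr : IntegrableOn
      (fun y : ℝ =>
        (y * (1 - y)) ^ (ν - 1 / 2) * (1 - C * (y * (1 - y))) / y) (Set.Ioo (0 : ℝ) 1)
      ↔ IntegrableOn
      (fun y : ℝ =>
        y ^ (ν - 3 / 2) * (1 - y) ^ (ν - 1 / 2) - C * (y ^ (ν - 1 / 2) * (1 - y) ^ (ν + 1 / 2)))
      (Set.Ioo (0 : ℝ) 1) :=
    integrableOn_congr_fun hEq measurableSet_Ioo
  have hh : IntegrableOn
      (fun y : ℝ => C * (y ^ (ν - 1 / 2) * (1 - y) ^ (ν + 1 / 2))) (Set.Ioo (0 : ℝ) 1) :=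
    (int_beta _ _ (by linarith) (by linarith)).const_mul C
  constructor
  · intro hni
    by_contra hgt
    push_neg at hgt
    exact hni (hcongr.2 ((int_beta (ν - 3 / 2) (ν - 1 / 2) (by linarith) (by linarith)).sub hh))
  · intro hle hint
    rw [hcongr] at hint
    have hg : IntegrableOn
        (fun y : ℝ => y ^ (ν - 3 / 2) * (1 - y) ^ (ν - 1 / 2)) (Set.Ioo (0 : ℝ) 1) := by
      have h2 := hint.add hh
      simpa only [Pi.add_def, sub_add_cancel] using h2
    exact not_int (ν - 3 / 2) (ν - 1 / 2) (by linarith) hg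
end
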